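/- Let γ > 4, ψ(x) = x^{-1/(γ-1)} on (0,1], g(x) = ∫₀¹ ψ(b)(1 − exp(−x ψ(b))) db, θ_c = 1/∫₀¹ ψ(x)² dx, and for θ > θ_c let A_θ be the unique positive solution of A = θ g(A). Then as θ ↓ θ_c, A_θ ∼ (2 ∫₀¹ ψ(x)² dx) / (θ_c ∫₀¹ ψ(x)³ dx) · (θ − θ_c); in particular A_θ / (θ − θ_c) converges to a finite positive constant. -/

import Mathlib

/-!
Write `g(x) = x ∫ψ² + x² Φ(x)`; by dominated convergence (using `0 ≤ e^{-t} - 1 + t ≤ t²/2`),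
`Φ(x) → -∫ψ³/2` as `x ↓ 0`. Dividing `A = θ g(A)` by `A` and using `θc ∫ψ² = 1` gives
`θ A Φ(A) = -(θ - θc) ∫ψ²`, so the asymptotics follow once `A_θ → 0`. That comes from the concavity
of `g`: `g(x)/x` is nonincreasing and strictly below `∫ψ² = 1/θc`, so `A_θ ≥ u` would force
`1/θ = g(A_θ)/A_θ ≤ g(u)/u < 1/θc`, which fails for `θ` close to `θc`.
-/

open MeasureTheory Filter Set Topology Real

-- Invert `1 + t + t²/2 ≤ exp t`, using `(1 - t + t²/2) * (1 + t + t²/2) = 1 + t⁴/4 ≥ 1`.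
lemma exp_neg_le_one_sub_add_sq_div_two {t : ℝ} (ht : 0 ≤ t) :
    exp (-t) ≤ 1 - t + t ^ 2 / 2 := by
  have hq := quadratic_le_exp_of_nonneg ht
  have hprod : exp (-t) * exp t = 1 := by rw [← exp_add, neg_add_cancel, exp_zero]
  nlinarith [exp_pos (-t), sq_nonneg (t ^ 2)]

lemma tendsto_exp_sub_one_sub_div_sq :
    Tendsto (fun x => (exp x - 1 - x) / x ^ 2) (𝓝[≠] 0) (𝓝 (1 / 2)) := by
  have h := ((exp_sub_sum_range_succ_isLittleO_pow 2).tendsto_div_nhds_zero.mono_left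
    (nhdsWithin_le_nhds (s := {0}ᶜ))).add_const (1 / 2 : ℝ)
  rw [zero_add] at h
  refine h.congr' (eventually_nhdsWithin_of_forall fun x hx => ?_)
  have hx : x ≠ 0 := hx
  simp only [Finset.sum_range_succ, Finset.sum_range_zero]
  field_simp
  norm_num [Nat.factorial]
  ring

lemma tendsto_mul_one_sub_exp_neg_sub_div_sq (s : ℝ) :
    Tendsto (fun x => s * (1 - exp (-x * s) - x * s) / x ^ 2) (𝓝[≠] 0) (𝓝 (-(s ^ 3) / 2)) := by
  rcases eq_or_ne s 0 with rfl | hs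
  · simp
  have hlin : Tendsto (fun x => -x * s) (𝓝[≠] 0) (𝓝[≠] 0) :=
    tendsto_nhdsWithin_of_tendsto_nhds_of_eventually_within _
      (((continuous_neg.mul continuous_const).tendsto' 0 0 (by simp)).mono_left nhdsWithin_le_nhds)
      (eventually_nhdsWithin_of_forall fun x hx => mul_ne_zero (neg_ne_zero.2 hx) hs)
  have h := (tendsto_exp_sub_one_sub_div_sq.comp hlin).const_mul (-(s ^ 3))
  rw [mul_one_div] at h
  refine h.congr' (eventually_nhdsWithin_of_forall fun x hx => ?_)
  have hx : x ≠ 0 := hx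
  simp only [Function.comp_apply]
  field_simp
  ring

lemma mul_one_sub_exp_neg_mul_le {x y : ℝ} (hx : 0 < x) (hxy : x ≤ y) (s : ℝ) :
    x * (1 - exp (-y * s)) ≤ y * (1 - exp (-x * s)) := by
  have hy : 0 < y := hx.trans_le hxy
  have hconv := convexOn_exp.2 (mem_univ (-y * s)) (mem_univ 0) (div_nonneg hx.le hy.le)
    (sub_nonneg.2 ((div_le_one hy).2 hxy)) (add_sub_cancel _ _)
  simp only [smul_eq_mul, mul_zero, add_zero, exp_zero, mul_one] at hconv
  rw [show x / y * (-y * s) = -x * s by field_simp] at hconv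
  have := mul_le_mul_of_nonneg_left hconv hy.le
  field_simp at this
  simp only [neg_mul] at this ⊢
  linarith

section ChungLuFunction

variable {α : Type*} [MeasurableSpace α] {μ : Measure α} {ψ : α → ℝ} {x : ℝ}

noncomputable def chungLuG (μ : Measure α) (ψ : α → ℝ) (x : ℝ) : ℝ :=
  ∫ b, ψ b * (1 - exp (-x * ψ b)) ∂μ

lemma integrable_chungLuG_integrand (hψm : AEStronglyMeasurable ψ μ) (hψ : 0 ≤ᵐ[μ] ψ)
    (h2 : Integrable (fun b => ψ b ^ 2) μ) (hx : 0 ≤ x) :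
    Integrable (fun b => ψ b * (1 - exp (-x * ψ b))) μ := by
  refine (h2.const_mul x).mono' ((by fun_prop : Continuous fun s : ℝ => s * (1 - exp (-x * s)))
    |>.comp_aestronglyMeasurable hψm) ?_
  filter_upwards [hψ] with b hb
  have hlo : 0 ≤ 1 - exp (-(x * ψ b)) :=
    sub_nonneg.2 (exp_le_one_iff.2 (neg_nonpos.2 (mul_nonneg hx hb)))
  have hhi : 1 - exp (-(x * ψ b)) ≤ x * ψ b := by linarith [one_sub_le_exp_neg (x * ψ b)]
  rw [neg_mul, Real.norm_eq_abs, abs_of_nonneg (mul_nonneg hb hlo)]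
  nlinarith [mul_le_mul_of_nonneg_left hhi hb]

lemma integral_pos_of_ae_pos [NeZero μ] {f : α → ℝ} (hf : ∀ᵐ b ∂μ, 0 < f b)
    (hfi : Integrable f μ) : 0 < ∫ b, f b ∂μ := by
  refine (integral_nonneg_of_ae (hf.mono fun b hb => hb.le)).lt_of_ne fun h0 => NeZero.ne μ ?_
  have hzero := (integral_eq_zero_iff_of_nonneg_ae (hf.mono fun b hb => hb.le) hfi).1 h0.symm
  exact ae_eq_bot.1 (eventually_false_iff_eq_bot.1 ((hf.and hzero).mono fun b hb => hb.1.ne' hb.2))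

lemma chungLuG_lt_mul_integral_sq [NeZero μ] (hψm : AEStronglyMeasurable ψ μ)
    (hψ : ∀ᵐ b ∂μ, 0 < ψ b) (h2 : Integrable (fun b => ψ b ^ 2) μ) (hx : 0 < x) :
    chungLuG μ ψ x < x * ∫ b, ψ b ^ 2 ∂μ := by
  have hψ0 : 0 ≤ᵐ[μ] ψ := hψ.mono fun b hb => hb.le
  have hint := integrable_chungLuG_integrand hψm hψ0 h2 hx.le
  have hgap : ∀ᵐ b ∂μ, 0 < x * ψ b ^ 2 - ψ b * (1 - exp (-x * ψ b)) := by
    filter_upwards [hψ] with b hb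
    have := one_sub_lt_exp_neg (mul_pos hx hb).ne'
    rw [neg_mul]
    nlinarith
  have hpos := integral_pos_of_ae_pos hgap ((h2.const_mul x).sub hint)
  rw [integral_sub (h2.const_mul x) hint, integral_const_mul] at hpos
  exact sub_pos.1 hpos

lemma antitoneOn_chungLuG_div (hψm : AEStronglyMeasurable ψ μ) (hψ : 0 ≤ᵐ[μ] ψ)
    (h2 : Integrable (fun b => ψ b ^ 2) μ) :
    AntitoneOn (fun x => chungLuG μ ψ x / x) (Ioi 0) := by
  intro x (hx : 0 < x) y (hy : 0 < y) hxy
  rw [div_le_div_iff₀ hy hx, chungLuG, chungLuG, ← integral_mul_const, ← integral_mul_const]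
  refine integral_mono_ae ((integrable_chungLuG_integrand hψm hψ h2 hy.le).mul_const x)
    ((integrable_chungLuG_integrand hψm hψ h2 hx.le).mul_const y) ?_
  filter_upwards [hψ] with b hb
  have := mul_le_mul_of_nonneg_left (mul_one_sub_exp_neg_mul_le hx hxy (ψ b)) hb
  linarith

lemma tendsto_chungLuG_sub_div_sq (hψm : AEStronglyMeasurable ψ μ) (hψ : 0 ≤ᵐ[μ] ψ)
    (h2 : Integrable (fun b => ψ b ^ 2) μ) (h3 : Integrable (fun b => ψ b ^ 3) μ) :
    Tendsto (fun x => (chungLuG μ ψ x - x * ∫ b, ψ b ^ 2 ∂μ) / x ^ 2) (𝓝[>] 0)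
      (𝓝 (-(∫ b, ψ b ^ 3 ∂μ) / 2)) := by
  have hrem : ∀ x, 0 < x → (chungLuG μ ψ x - x * ∫ b, ψ b ^ 2 ∂μ) / x ^ 2
      = ∫ b, ψ b * (1 - exp (-x * ψ b) - x * ψ b) / x ^ 2 ∂μ := by
    intro x hx
    rw [chungLuG, ← integral_const_mul, ← integral_sub
      (integrable_chungLuG_integrand hψm hψ h2 hx.le) (h2.const_mul x), ← integral_div]
    congr 1 with b
    ring
  rw [show -(∫ b, ψ b ^ 3 ∂μ) / 2 = ∫ b, -(ψ b ^ 3) / 2 ∂μ by rw [integral_div, integral_neg]]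
  refine (tendsto_integral_filter_of_dominated_convergence (fun b => ψ b ^ 3 / 2)
    (Eventually.of_forall fun x => ?_) ?_ (h3.div_const 2) ?_).congr'
    (eventually_nhdsWithin_of_forall fun x hx => (hrem x hx).symm)
  · exact (by fun_prop : Continuous fun s : ℝ => s * (1 - exp (-x * s) - x * s) / x ^ 2)
      |>.comp_aestronglyMeasurable hψm
  · filter_upwards [self_mem_nhdsWithin] with x (hx : 0 < x)
    filter_upwards [hψ] with b hb
    have hlo := one_sub_le_exp_neg (x * ψ b)
    have hhi := exp_neg_le_one_sub_add_sq_div_two (mul_nonneg hx.le hb)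
    have hbound : |1 - exp (-(x * ψ b)) - x * ψ b| ≤ (x * ψ b) ^ 2 / 2 := by
      rw [abs_of_nonpos (by linarith)]
      linarith
    rw [Real.norm_eq_abs, abs_div, abs_mul, abs_of_nonneg hb, abs_of_pos (pow_pos hx 2),
      div_le_iff₀ (by positivity), neg_mul]
    calc ψ b * |1 - exp (-(x * ψ b)) - x * ψ b| ≤ ψ b * ((x * ψ b) ^ 2 / 2) :=
          mul_le_mul_of_nonneg_left hbound hb
      _ = ψ b ^ 3 / 2 * x ^ 2 := by ring
  · exact Eventually.of_forall fun b => by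
      simpa only [neg_div] using (tendsto_mul_one_sub_exp_neg_sub_div_sq (ψ b)).mono_left
        (nhdsWithin_mono 0 fun x (hx : x ∈ Ioi 0) => ne_of_gt hx)

end ChungLuFunction

section FixedPoint

variable {G A : ℝ → ℝ} {I θc : ℝ}

lemma tendsto_fixedPoint_nhdsGT_zero (hθc : 0 < θc) (hθcI : θc * I = 1)
    (hlt : ∀ x, 0 < x → G x < x * I) (hanti : AntitoneOn (fun x => G x / x) (Ioi 0))
    (hA : ∀ θ, θc < θ → 0 < A θ ∧ A θ = θ * G (A θ)) :
    Tendsto A (𝓝[>] θc) (𝓝[>] 0) := by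
  have hApos : ∀ᶠ θ in 𝓝[>] θc, A θ ∈ Ioi 0 :=
    eventually_nhdsWithin_of_forall fun θ hθ => (hA θ hθ).1
  refine tendsto_nhdsWithin_iff.2 ⟨(tendsto_order.2 ⟨fun l hl => hApos.mono fun θ hθ => hl.trans hθ,
    fun u hu => ?_⟩), hApos⟩
  have hq : θc * (G u / u) < 1 := by
    rw [← hθcI]
    exact mul_lt_mul_of_pos_left ((div_lt_iff₀ hu).2 (by linarith [hlt u hu])) hθc
  have hnear : ∀ᶠ θ in 𝓝[>] θc, θ * (G u / u) < 1 :=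
    eventually_nhdsWithin_of_eventually_nhds
      ((continuous_id.mul continuous_const).tendsto θc |>.eventually_lt_const hq)
  filter_upwards [self_mem_nhdsWithin, hnear] with θ (hθ : θc < θ) hθq
  obtain ⟨hApos, hAeq⟩ := hA θ hθ
  by_contra! hle
  have hratio : G (A θ) / A θ = 1 / θ := by
    rw [div_eq_div_iff hApos.ne' (hθc.trans hθ).ne']
    linarith
  have := hanti hu hApos hle
  simp only [hratio] at this
  rw [div_le_iff₀ (hθc.trans hθ)] at this
  linarith

lemma tendsto_fixedPoint_div_sub {c : ℝ} (hθcI : θc * I = 1)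
    (hA : ∀ θ, θc < θ → 0 < A θ ∧ A θ = θ * G (A θ)) (hA0 : Tendsto A (𝓝[>] θc) (𝓝[>] 0))
    (hrem : Tendsto (fun x => (G x - x * I) / x ^ 2) (𝓝[>] 0) (𝓝 c)) (hc : c ≠ 0) :
    Tendsto (fun θ => A θ / (θ - θc)) (𝓝[>] θc) (𝓝 (-I / (θc * c))) := by
  have hθc : θc ≠ 0 := left_ne_zero_of_mul_eq_one hθcI
  have hI : I ≠ 0 := right_ne_zero_of_mul_eq_one hθcI
  have hden : Tendsto (fun θ => θ * ((G (A θ) - A θ * I) / A θ ^ 2)) (𝓝[>] θc) (𝓝 (θc * c)) :=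
    (tendsto_id.mono_left nhdsWithin_le_nhds).mul (hrem.comp hA0)
  refine (tendsto_const_nhds.div hden (mul_ne_zero hθc hc)).congr'
    (eventually_nhdsWithin_of_forall fun θ (hθ : θc < θ) => ?_)
  obtain ⟨hApos, hAeq⟩ := hA θ hθ
  have hkey : θ * ((G (A θ) - A θ * I) / A θ ^ 2) = -I * (θ - θc) / A θ := by
    rw [mul_div_assoc', div_eq_div_iff (pow_ne_zero 2 hApos.ne') hApos.ne']
    linear_combination (-A θ) * hAeq - A θ ^ 2 * hθcI
  simp only [Pi.div_apply, hkey]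
  field_simp [sub_ne_zero.2 hθ.ne', hApos.ne']

lemma tendsto_chungLuG_fixedPoint_div_sub {α : Type*} [MeasurableSpace α] {μ : Measure α}
    [NeZero μ] {ψ : α → ℝ} {A : ℝ → ℝ} {θc : ℝ} (hψm : AEStronglyMeasurable ψ μ)
    (hψ : ∀ᵐ b ∂μ, 0 < ψ b)
    (h2 : Integrable (fun b => ψ b ^ 2) μ) (h3 : Integrable (fun b => ψ b ^ 3) μ)
    (hθcI : θc * ∫ b, ψ b ^ 2 ∂μ = 1)
    (hA : ∀ θ, θc < θ → 0 < A θ ∧ A θ = θ * chungLuG μ ψ (A θ)) :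
    Tendsto (fun θ => A θ / (θ - θc)) (𝓝[>] θc)
      (𝓝 (2 * (∫ b, ψ b ^ 2 ∂μ) / (θc * ∫ b, ψ b ^ 3 ∂μ))) := by
  have hψ0 : 0 ≤ᵐ[μ] ψ := hψ.mono fun b hb => hb.le
  have hI2 := integral_pos_of_ae_pos (hψ.mono fun b hb => pow_pos hb 2) h2
  have hI3 := integral_pos_of_ae_pos (hψ.mono fun b hb => pow_pos hb 3) h3
  have hθc : 0 < θc := pos_of_mul_pos_left (hθcI ▸ one_pos) hI2.le
  have hA0 := tendsto_fixedPoint_nhdsGT_zero hθc hθcI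
    (fun x hx => chungLuG_lt_mul_integral_sq hψm hψ h2 hx) (antitoneOn_chungLuG_div hψm hψ0 h2) hA
  convert tendsto_fixedPoint_div_sub hθcI hA hA0 (tendsto_chungLuG_sub_div_sq hψm hψ0 h2 h3)
    (by linarith) using 2
  field_simp

lemma integrableOn_Ioc_rpow_pow {p : ℝ} {n : ℕ} (h : -1 < n * p) :
    IntegrableOn (fun x : ℝ => (x ^ p) ^ n) (Ioc 0 1) :=
  ((intervalIntegral.intervalIntegrable_rpow' (a := 0) (b := 1) h).congr fun x hx => by
    rw [uIoc_of_le zero_le_one] at hx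
    rw [← rpow_mul_natCast hx.1.le, mul_comm]).1

/-- For `γ > 4`, `ψ(x) = x^(-1/(γ-1))`,
`g(x) = ∫₀¹ ψ(b)(1 - exp(-x ψ(b))) db`, `θ_c = 1/∫₀¹ ψ²`, and `A θ` the unique
positive solution of `A = θ g(A)` for `θ > θ_c`:
`A_θ ∼ (2 ∫₀¹ ψ²)/(θ_c ∫₀¹ ψ³) · (θ - θ_c)` as `θ ↓ θ_c`; in particular
`A_θ/(θ - θ_c)` converges to a finite positive constant. -/
theorem chungLu_A_asymptotics_supercritical (γ : ℝ) (hγ : 4 < γ)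
    (ψ g A : ℝ → ℝ) (θc : ℝ)
    (hψ : ∀ x, ψ x = x ^ (-(1 / (γ - 1))))
    (hg : ∀ x, g x = ∫ b in (0:ℝ)..1, ψ b * (1 - Real.exp (-x * ψ b)))
    (hθc : θc = 1 / ∫ x in (0:ℝ)..1, (ψ x) ^ 2)
    (hA : ∀ θ : ℝ, θc < θ →
      0 < A θ ∧ A θ = θ * g (A θ) ∧
        ∀ A' : ℝ, 0 < A' → A' = θ * g A' → A' = A θ) :
    Tendsto
      (fun θ => A θ /
        ((2 * ∫ x in (0:ℝ)..1, (ψ x) ^ 2) / (θc * ∫ x in (0:ℝ)..1, (ψ x) ^ 3)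
          * (θ - θc)))
      (nhdsWithin θc (Ioi θc)) (nhds 1)
    ∧ 0 < (2 * ∫ x in (0:ℝ)..1, (ψ x) ^ 2) / (θc * ∫ x in (0:ℝ)..1, (ψ x) ^ 3)
    ∧ Tendsto (fun θ => A θ / (θ - θc)) (nhdsWithin θc (Ioi θc))
        (nhds ((2 * ∫ x in (0:ℝ)..1, (ψ x) ^ 2) /
          (θc * ∫ x in (0:ℝ)..1, (ψ x) ^ 3))) := by
  have hψ' : ψ = fun x => x ^ (-(1 / (γ - 1))) := funext hψ
  have hint : ∀ n : ℕ, (n : ℝ) < γ - 1 → IntegrableOn (fun x => ψ x ^ n) (Ioc 0 1) := fun n hn =>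
    hψ' ▸ integrableOn_Ioc_rpow_pow
      (by rwa [mul_neg, mul_one_div, neg_lt_neg_iff, div_lt_one (by linarith)])
  have h2 := hint 2 (by norm_num; linarith)
  have h3 := hint 3 (by norm_num; linarith)
  have hψm : AEStronglyMeasurable ψ (volume.restrict (Ioc 0 1)) :=
    hψ' ▸ (measurable_id.pow_const _).aestronglyMeasurable
  have hψpos : ∀ᵐ x ∂volume.restrict (Ioc 0 1), 0 < ψ x :=
    (ae_restrict_mem measurableSet_Ioc).mono fun x hx => hψ x ▸ rpow_pos_of_pos hx.1 _
  have : NeZero (volume.restrict (Ioc (0 : ℝ) 1)) := ⟨by simp⟩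
  have hI2 := integral_pos_of_ae_pos (hψpos.mono fun x hx => pow_pos hx 2) h2
  have hI3 := integral_pos_of_ae_pos (hψpos.mono fun x hx => pow_pos hx 3) h3
  simp only [intervalIntegral.integral_of_le zero_le_one] at hg hθc ⊢
  obtain rfl : g = chungLuG (volume.restrict (Ioc 0 1)) ψ := funext hg
  have hlim := tendsto_chungLuG_fixedPoint_div_sub hψm hψpos h2 h3
    (by rw [hθc, one_div_mul_cancel hI2.ne']) fun θ hθ => (hA θ hθ).imp_right And.left
  have hc : 0 < 2 * (∫ x in Ioc 0 1, ψ x ^ 2) / (θc * ∫ x in Ioc 0 1, ψ x ^ 3) := by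
    rw [hθc]; positivity
  set c := 2 * (∫ x in Ioc 0 1, ψ x ^ 2) / (θc * ∫ x in Ioc 0 1, ψ x ^ 3)
  refine ⟨?_, hc, hlim⟩
  simpa only [div_mul_eq_div_div_swap, div_self hc.ne'] using hlim.div_const c
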